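/- arXiv:1009.4079 — 3 statements merged into one kernel-verified Lean document; each statement's English description precedes it below -/
import Mathlib

section
/- Let σ be an involutive isometry of a Euclidean space V preserving a root system Δ, such that no root of Δ vanishes identically on the fixed subspace V^σ. For a root α with σ*α ≠ α, writing H_α = H_α^k + H_α^p for the decomposition of the vector dual to α into its components in V^σ and its orthogonal complement, either ⟨H_α, H_{σ*α}⟩ = 0 and |H_α^p|² = |H_α^k|², or 2⟨H_α, H_{σ*α}⟩/|H_α|² = -1, |H_α^p|² = 3|H_α^k|², and α + σ*α ∈ Δ. -/
open scoped RealInnerProductSpace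

/-- A (possibly nonreduced) root system in a Euclidean space `V`. -/
structure IsRootSystem {V : Type*} [NormedAddCommGroup V] [InnerProductSpace ℝ V]
    (Δ : Set V) : Prop where
  finite : Δ.Finite
  spans : Submodule.span ℝ Δ = ⊤
  nonzero : ∀ α ∈ Δ, α ≠ 0
  cartan_int : ∀ α ∈ Δ, ∀ β ∈ Δ, ∃ n : ℤ, 2 * ⟪α, β⟫ / ⟪α, α⟫ = (n : ℝ)
  reflect_mem : ∀ α ∈ Δ, ∀ β ∈ Δ, β - (2 * ⟪α, β⟫ / ⟪α, α⟫) • α ∈ Δ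

/-- Identifying roots with vectors `H_α` via the inner product, the component of `H_α` in the
`+1`-eigenspace `V^σ` of the involutive isometry `σ` is `(H_α + H_{σ*α})/2`. -/
noncomputable def kPart {V : Type*} [NormedAddCommGroup V] [InnerProductSpace ℝ V]
    (σ : V →ₗᵢ[ℝ] V) (α : V) : V := (2 : ℝ)⁻¹ • (α + σ α)

/-- The component of `H_α` in the orthogonal complement of `V^σ`: `(H_α - H_{σ*α})/2`. -/
noncomputable def pPart {V : Type*} [NormedAddCommGroup V] [InnerProductSpace ℝ V]
    (σ : V →ₗᵢ[ℝ] V) (α : V) : V := (2 : ℝ)⁻¹ • (α - σ α)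

/-- Let `σ` be an involutive linear isometry of `V` preserving a root system `Δ`, such that no
root of `Δ` vanishes identically on the fixed subspace `V^σ`.  If `α` is a root with
`σ*α ≠ α`, then either `⟨H_α, H_{σ*α}⟩ = 0` and `|H_α^p|² = |H_α^k|²`, or
`2⟨H_α, H_{σ*α}⟩/|H_α|² = -1`, `|H_α^p|² = 3|H_α^k|²`, and `α + σ*α ∈ Δ`. -/
theorem root_involution_dichotomy
    {V : Type*} [NormedAddCommGroup V] [InnerProductSpace ℝ V]
    (σ : V →ₗᵢ[ℝ] V) (hinv : ∀ v, σ (σ v) = v)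
    {Δ : Set V} (hΔ : IsRootSystem Δ) (hσΔ : σ '' Δ = Δ)
    (hnovanish : ∀ α ∈ Δ, ∃ h : V, σ h = h ∧ ⟪α, h⟫ ≠ 0)
    {α : V} (hα : α ∈ Δ) (hne : σ α ≠ α) :
    (⟪α, σ α⟫ = 0 ∧ ‖pPart σ α‖ ^ 2 = ‖kPart σ α‖ ^ 2) ∨
      (2 * ⟪α, σ α⟫ / ⟪α, α⟫ = -1 ∧ ‖pPart σ α‖ ^ 2 = 3 * ‖kPart σ α‖ ^ 2 ∧
        α + σ α ∈ Δ) := by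
  have hσα : σ α ∈ Δ := by
    rw [← hσΔ]; exact ⟨α, hα, rfl⟩
  have hinner : ∀ u v : V, ⟪σ u, σ v⟫ = ⟪u, v⟫ := fun u v => σ.inner_map_map u v
  have hnormσ : ‖σ α‖ = ‖α‖ := σ.norm_map α
  have hα0 : α ≠ 0 := hΔ.nonzero α hα
  have ha : ⟪α, α⟫ = ‖α‖ ^ 2 := real_inner_self_eq_norm_sq α
  have hapos : (0 : ℝ) < ⟪α, α⟫ := by
    exact ha ▸ pow_pos (norm_pos_iff.mpr hα0) 2
  set a := ⟪α, α⟫ with haa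
  set c := ⟪α, σ α⟫ with hc
  -- σ fixes h ⇒ ⟪σ α, h⟫ = ⟪α, h⟫
  have hfixinner : ∀ h : V, σ h = h → ⟪σ α, h⟫ = ⟪α, h⟫ := by
    intro h hh
    conv_lhs => rw [← hh]
    exact hinner α h
  -- σ α ≠ -α
  have hknz : σ α ≠ -α := by
    intro hcontra
    obtain ⟨h, hh, hne0⟩ := hnovanish α hα
    have := hfixinner h hh
    rw [hcontra, inner_neg_left] at this
    apply hne0; linarith
  -- c < a
  have hclt : c < a := by
    have h1 : (0:ℝ) < ‖α - σ α‖ ^ 2 := by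
      have h0 : α - σ α ≠ 0 := sub_ne_zero.mpr (Ne.symm hne)
      exact pow_pos (norm_pos_iff.mpr h0) 2
    have h2 : ‖α - σ α‖ ^ 2 = ‖α‖ ^ 2 - 2 * c + ‖σ α‖ ^ 2 := by
      rw [hc]; exact norm_sub_sq_real α (σ α)
    rw [hnormσ, ← ha] at h2
    nlinarith
  have hcgt : -a < c := by
    have h1 : (0:ℝ) < ‖α + σ α‖ ^ 2 := by
      have : α + σ α ≠ 0 := by
        intro h; apply hknz; rw [eq_neg_iff_add_eq_zero, add_comm]; exact h
      exact pow_pos (norm_pos_iff.mpr this) 2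
    have h2 : ‖α + σ α‖ ^ 2 = ‖α‖ ^ 2 + 2 * c + ‖σ α‖ ^ 2 := by
      rw [hc]; exact norm_add_sq_real α (σ α)
    rw [hnormσ, ← ha] at h2
    nlinarith
  -- norms of parts
  have hpnorm : ‖pPart σ α‖ ^ 2 = (a - c) / 2 := by
    rw [pPart, norm_smul, mul_pow]
    have h2 : ‖α - σ α‖ ^ 2 = ‖α‖ ^ 2 - 2 * c + ‖σ α‖ ^ 2 := by
      rw [hc]; exact norm_sub_sq_real α (σ α)
    rw [hnormσ, ← ha] at h2
    rw [h2]
    norm_num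
    ring
  have hknorm : ‖kPart σ α‖ ^ 2 = (a + c) / 2 := by
    rw [kPart, norm_smul, mul_pow]
    have h2 : ‖α + σ α‖ ^ 2 = ‖α‖ ^ 2 + 2 * c + ‖σ α‖ ^ 2 := by
      rw [hc]; exact norm_add_sq_real α (σ α)
    rw [hnormσ, ← ha] at h2
    rw [h2]
    norm_num
    ring
  -- cartan integer
  obtain ⟨n, hn⟩ := hΔ.cartan_int α hα (σ α) hσα
  rw [← hc, ← haa] at hn
  have hn2 : (n : ℝ) < 2 := by
    rw [← hn]; rw [div_lt_iff₀ hapos]; nlinarith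
  have hn2' : (-2 : ℝ) < n := by
    rw [← hn]; rw [lt_div_iff₀ hapos]; nlinarith
  have hnint : n = -1 ∨ n = 0 ∨ n = 1 := by
    have h1 : n < 2 := by exact_mod_cast hn2
    have h2 : -2 < n := by exact_mod_cast hn2'
    omega
  rcases hnint with h | h | h
  · -- n = -1
    right
    subst h
    have hn' : 2 * c / a = -1 := by rw [hn]; norm_num
    have hca : c = -a / 2 := by
      field_simp at hn'; linarith
    refine ⟨hn', ?_, ?_⟩
    · rw [hpnorm, hknorm, hca]; ring
    · have := hΔ.reflect_mem (σ α) hσα α hα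
      have heq : 2 * ⟪σ α, α⟫ / ⟪σ α, σ α⟫ = -1 := by
        rw [real_inner_comm, hinner, ← hc, ← haa, hn']
      rw [heq] at this
      simpa [sub_neg_eq_add, add_comm] using this
  · -- n = 0 : c = 0
    left
    subst h
    have hc0 : c = 0 := by
      rw [Int.cast_zero] at hn
      have := (div_eq_zero_iff.mp hn).resolve_right (ne_of_gt hapos)
      linarith
    exact ⟨hc0, by rw [hpnorm, hknorm, hc0]; ring⟩
  · -- n = 1 : contradiction
    exfalso
    subst h
    rw [Int.cast_one] at hn
    have hmem := hΔ.reflect_mem α hα (σ α) hσα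
    rw [← hc, ← haa, hn, one_smul] at hmem
    obtain ⟨h, hh, hne0⟩ := hnovanish (σ α - α) hmem
    apply hne0
    rw [inner_sub_left, hfixinner h hh, sub_self]
end

section
/- Let σ be an involutive isometry preserving a root system Δ in V such that no root vanishes on V^σ. Then the set of nonzero restrictions {α|_{V^σ} : α ∈ Δ} forms a (possibly nonreduced) root system in the dual of V^σ. -/
open scoped RealInnerProductSpace

/-- A (possibly nonreduced) root system contained in a subspace `W` of `V`. -/
structure IsRootSystemIn {V : Type*} [NormedAddCommGroup V] [InnerProductSpace ℝ V]
    (W : Submodule ℝ V) (R : Set V) : Prop where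
  subset : R ⊆ (W : Set V)
  finite : R.Finite
  spans : Submodule.span ℝ R = W
  nonzero : ∀ α ∈ R, α ≠ 0
  cartan_int : ∀ α ∈ R, ∀ β ∈ R, ∃ n : ℤ, 2 * ⟪α, β⟫ / ⟪α, α⟫ = (n : ℝ)
  reflect_mem : ∀ α ∈ R, ∀ β ∈ R, β - (2 * ⟪α, β⟫ / ⟪α, α⟫) • α ∈ R

/-- Let `σ` be an involutive linear isometry of `V` preserving a root system `Δ`, such that no
root of `Δ` vanishes identically on the fixed subspace `V^σ`.  Then the set of (automatically
nonzero) restrictions `{α|_{V^σ} : α ∈ Δ}` is a (possibly nonreduced) root system in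
(the dual of) `V^σ`. -/
theorem restricted_roots_form_root_system
    {V : Type*} [NormedAddCommGroup V] [InnerProductSpace ℝ V]
    (σ : V →ₗᵢ[ℝ] V) (hinv : ∀ v, σ (σ v) = v)
    {Δ : Set V} (hΔ : IsRootSystem Δ) (hσΔ : σ '' Δ = Δ)
    (hnovanish : ∀ α ∈ Δ, ∃ h : V, σ h = h ∧ ⟪α, h⟫ ≠ 0) :
    IsRootSystemIn (V := V) (LinearMap.eqLocus σ.toLinearMap LinearMap.id) (kPart σ '' Δ) := by
  -- basic consequences of σ being an involutive isometry
  have hii : ∀ x y : V, ⟪σ x, σ y⟫ = ⟪x, y⟫ := fun x y => σ.inner_map_map x y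
  have hadj : ∀ x y : V, ⟪σ x, y⟫ = ⟪x, σ y⟫ := fun x y => by
    rw [← hii x (σ y), hinv]
  have hpos : ∀ x : V, x ≠ 0 → (0:ℝ) < ⟪x, x⟫ := fun x hx => by
    rw [real_inner_self_eq_norm_mul_norm]
    exact mul_pos (norm_pos_iff.mpr hx) (norm_pos_iff.mpr hx)
  have hfix : ∀ x, σ (kPart σ x) = kPart σ x := fun x => by
    simp only [kPart, map_smul, map_add, hinv]
    rw [add_comm]
  have hkl : ∀ x y : V, ⟪kPart σ x, y⟫ = 2⁻¹ * (⟪x, y⟫ + ⟪σ x, y⟫) := fun x y => by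
    simp [kPart, inner_add_left, real_inner_smul_left]; ring
  have hfixed_inner : ∀ h x : V, σ h = h → ⟪h, kPart σ x⟫ = ⟪h, x⟫ := fun h x hh => by
    rw [real_inner_comm, hkl, ← hh, hadj, hinv, hh, real_inner_comm]
    ring
  have hkσ : ∀ a : V, kPart σ (σ a) = kPart σ a := fun a => by
    simp [kPart, hinv, add_comm]
  have hklin : ∀ (x y : V) (c : ℝ), kPart σ (x - c • y) = kPart σ x - c • kPart σ y :=
    fun x y c => by
    simp only [kPart, map_sub, map_smul]
    module
  have hmemσ : ∀ a ∈ Δ, σ a ∈ Δ := fun a ha => by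
    rw [← hσΔ]; exact ⟨a, ha, rfl⟩
  have hA : ∀ a ∈ Δ, (0:ℝ) < ⟪a, a⟫ := fun a ha => hpos a (hΔ.nonzero a ha)
  -- nonvanishing of the restrictions
  have hk0 : ∀ a ∈ Δ, kPart σ a ≠ 0 := by
    intro a ha h0
    obtain ⟨h, hh, hne⟩ := hnovanish a ha
    apply hne
    have h1 := hfixed_inner h a hh
    rw [h0, inner_zero_right] at h1
    exact (real_inner_comm a h).symm.trans h1.symm
  -- spanning
  have hspan : Submodule.span ℝ (kPart σ '' Δ)
      = LinearMap.eqLocus σ.toLinearMap LinearMap.id := by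
    have himg : kPart σ '' Δ = ((2:ℝ)⁻¹ • (LinearMap.id + σ.toLinearMap) : V →ₗ[ℝ] V) '' Δ := rfl
    rw [himg, Submodule.span_image, hΔ.spans, Submodule.map_top]
    apply le_antisymm
    · rintro x ⟨y, rfl⟩
      show σ _ = _
      exact hfix y
    · intro x hx
      have hx' : σ x = x := hx
      exact ⟨x, by show (2:ℝ)⁻¹ • (x + σ x) = x; rw [hx', ← two_smul ℝ, smul_smul]; norm_num⟩
  -- the case where the "effective root" γ is fixed by σ and proportional to kPart σ a
  have main : ∀ a ∈ Δ, ∀ b ∈ Δ, ∀ γ ∈ Δ, σ γ = γ → ∀ c : ℤ, (c:ℝ) ≠ 0 →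
      γ = (c:ℝ) • kPart σ a →
      ∃ n : ℤ, 2 * ⟪kPart σ a, kPart σ b⟫ / ⟪kPart σ a, kPart σ a⟫ = (n : ℝ) ∧
        kPart σ b - (n:ℝ) • kPart σ a ∈ kPart σ '' Δ := by
    intro a ha b hb γ hγ hγfix c hc hγk
    obtain ⟨n', hn'⟩ := hΔ.cartan_int γ hγ b hb
    have hγγ : ⟪γ, γ⟫ = (c:ℝ)^2 * ⟪kPart σ a, kPart σ a⟫ := by
      rw [hγk, real_inner_smul_left, real_inner_smul_right]; ring
    have hγb : ⟪γ, b⟫ = (c:ℝ) * ⟪kPart σ a, kPart σ b⟫ := by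
      rw [← hfixed_inner γ b hγfix, hγk, real_inner_smul_left]
    have hkk0 : ⟪kPart σ a, kPart σ a⟫ ≠ 0 := ne_of_gt (hpos _ (hk0 a ha))
    have hγγ0 : ⟪γ, γ⟫ ≠ 0 := ne_of_gt (hA γ hγ)
    rw [div_eq_iff hγγ0] at hn'
    rw [hγb, hγγ] at hn'
    refine ⟨c * n', ?_, ?_⟩
    · have h2 := mul_left_cancel₀ hc
        (show (c:ℝ) * (2 * ⟪kPart σ a, kPart σ b⟫)
            = (c:ℝ) * ((c:ℝ) * (n':ℝ) * ⟪kPart σ a, kPart σ a⟫) by linear_combination hn')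
      rw [div_eq_iff hkk0]
      push_cast
      linear_combination h2
    · have hδ := hΔ.reflect_mem γ hγ b hb
      have hn'' : 2 * ⟪γ, b⟫ / ⟪γ, γ⟫ = (n' : ℝ) := by
        rw [div_eq_iff hγγ0, hγb, hγγ]
        linear_combination hn'
      rw [hn''] at hδ
      refine ⟨_, hδ, ?_⟩
      rw [hklin]
      have hkγ : kPart σ γ = γ := by
        show (2:ℝ)⁻¹ • (γ + σ γ) = γ
        rw [hγfix, ← two_smul ℝ, smul_smul]; norm_num
      rw [hkγ, hγk]
      push_cast
      module
  -- the master lemma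
  have key : ∀ a ∈ Δ, ∀ b ∈ Δ,
      ∃ n : ℤ, 2 * ⟪kPart σ a, kPart σ b⟫ / ⟪kPart σ a, kPart σ a⟫ = (n : ℝ) ∧
        kPart σ b - (n:ℝ) • kPart σ a ∈ kPart σ '' Δ := by
    intro a ha b hb
    have hA' := hA a ha
    by_cases hfa : σ a = a
    · refine main a ha b hb a ha hfa 1 (by norm_num) ?_
      push_cast
      rw [one_smul]
      show a = (2:ℝ)⁻¹ • (a + σ a)
      rw [hfa, ← two_smul ℝ, smul_smul]; norm_num
    · have hfna : σ a ≠ -a := by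
        intro h
        exact hk0 a ha (by simp [kPart, h])
      obtain ⟨m, hm⟩ := hΔ.cartan_int (σ a) (hmemσ a ha) a ha
      have hσaσa : ⟪σ a, σ a⟫ = ⟪a, a⟫ := hii a a
      have hcomm : ⟪σ a, a⟫ = ⟪a, σ a⟫ := real_inner_comm a (σ a)
      have hm'' : 2 * ⟪a, σ a⟫ = (m:ℝ) * ⟪a, a⟫ := by
        rw [div_eq_iff (by rw [hσaσa]; exact ne_of_gt hA')] at hm
        linear_combination hm - 2 * hcomm + (m:ℝ) * hσaσa
      -- Cauchy–Schwarz bound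
      have hcs : |⟪a, σ a⟫| ≤ ⟪a, a⟫ := by
        have h1 := abs_real_inner_le_norm a (σ a)
        rw [σ.norm_map] at h1
        rw [real_inner_self_eq_norm_mul_norm]
        exact h1
      have hcsle := abs_le.mp hcs
      have hmub : (m:ℝ) ≤ 2 := by nlinarith [hcsle.1, hcsle.2]
      have hmlb : (-2:ℝ) ≤ (m:ℝ) := by nlinarith [hcsle.1, hcsle.2]
      -- equality cases of Cauchy-Schwarz
      have heq1 : ⟪a, σ a⟫ = ⟪a, a⟫ → σ a = a := by
        intro h
        have hz : ⟪a - σ a, a - σ a⟫ = (0:ℝ) := by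
          simp only [inner_sub_left, inner_sub_right]
          linear_combination hσaσa - hcomm - 2 * h
        have h3 := inner_self_eq_zero.mp hz
        rw [sub_eq_zero] at h3
        exact h3.symm
      have heq2 : ⟪a, σ a⟫ = -⟪a, a⟫ → σ a = -a := by
        intro h
        have hz : ⟪a + σ a, a + σ a⟫ = (0:ℝ) := by
          simp only [inner_add_left, inner_add_right]
          linear_combination hσaσa + hcomm + 2 * h
        have h3 := inner_self_eq_zero.mp hz
        exact eq_neg_of_add_eq_zero_right h3
      rcases lt_trichotomy (⟪a, σ a⟫ : ℝ) 0 with htneg | htzero | htpos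
      · -- negative: m = -1, γ = a + σ a ∈ Δ
        have hmneg : (m:ℝ) < 0 := by nlinarith
        have hm1 : m = -1 := by
          have h1 : m < 0 := by exact_mod_cast hmneg
          have h2 : (-2:ℤ) ≤ m := by exact_mod_cast hmlb
          interval_cases m
          · exfalso
            apply hfna
            apply heq2
            push_cast at hm''
            nlinarith [hm'']
          · rfl
        have hγ : a - (2 * ⟪σ a, a⟫ / ⟪σ a, σ a⟫) • σ a ∈ Δ :=
          hΔ.reflect_mem (σ a) (hmemσ a ha) a ha
        rw [hm, hm1] at hγ
        have hγ' : a + σ a ∈ Δ := by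
          convert hγ using 1
          push_cast
          module
        refine main a ha b hb (a + σ a) hγ' ?_ 2 (by norm_num) ?_
        · rw [map_add, hinv, add_comm]
        · show a + σ a = (2:ℝ) • ((2:ℝ)⁻¹ • (a + σ a))
          rw [smul_smul]; norm_num
      · -- orthogonal case
        obtain ⟨n₁, hn₁⟩ := hΔ.cartan_int a ha b hb
        obtain ⟨n₂, hn₂⟩ := hΔ.cartan_int (σ a) (hmemσ a ha) b hb
        rw [hσaσa] at hn₂
        rw [div_eq_iff (ne_of_gt hA')] at hn₁ hn₂
        refine ⟨n₁ + n₂, ?_, ?_⟩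
        · have e1 : ⟪kPart σ a, kPart σ b⟫ = 2⁻¹ * (⟪a, b⟫ + ⟪σ a, b⟫) := by
            rw [hfixed_inner _ b (hfix a), hkl]
          have e2 : ⟪kPart σ a, kPart σ a⟫ = 2⁻¹ * ⟪a, a⟫ := by
            rw [hfixed_inner _ a (hfix a), hkl]
            linear_combination 2⁻¹ * hcomm + 2⁻¹ * htzero
          rw [e1, e2, div_eq_iff (by intro hz; apply ne_of_gt hA'; linarith)]
          push_cast
          linear_combination 2⁻¹ * hn₁ + 2⁻¹ * hn₂
        · have hn₁' : 2 * ⟪a, b⟫ / ⟪a, a⟫ = (n₁ : ℝ) := by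
            rw [div_eq_iff (ne_of_gt hA')]; exact hn₁
          have hδ1 : b - (2 * ⟪a, b⟫ / ⟪a, a⟫) • a ∈ Δ := hΔ.reflect_mem a ha b hb
          rw [hn₁'] at hδ1
          have hδ2 := hΔ.reflect_mem (σ a) (hmemσ a ha) _ hδ1
          have hco : 2 * ⟪σ a, b - (n₁:ℝ) • a⟫ / ⟪σ a, σ a⟫ = (n₂:ℝ) := by
            rw [inner_sub_right, real_inner_smul_right, hσaσa,
              div_eq_iff (ne_of_gt hA')]
            linear_combination hn₂ - 2 * (n₁:ℝ) * hcomm - 2 * (n₁:ℝ) * htzero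
          rw [hco] at hδ2
          refine ⟨_, hδ2, ?_⟩
          rw [hklin, hklin, hkσ]
          push_cast
          module
      · -- positive: contradiction with σ a ≠ a
        exfalso
        have hmpos : (0:ℝ) < (m:ℝ) := by nlinarith
        have h1 : 1 ≤ m := by exact_mod_cast hmpos
        have h2 : m ≤ 2 := by exact_mod_cast hmub
        interval_cases m
        · -- m = 1 : a - σ a ∈ Δ, contradicting hnovanish
          have hδ : a - (2 * ⟪σ a, a⟫ / ⟪σ a, σ a⟫) • σ a ∈ Δ :=
            hΔ.reflect_mem (σ a) (hmemσ a ha) a ha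
          rw [hm] at hδ
          have hδ' : a - σ a ∈ Δ := by
            convert hδ using 1
            push_cast
            module
          obtain ⟨h, hh, hne⟩ := hnovanish _ hδ'
          apply hne
          rw [inner_sub_left]
          have h4 : ⟪σ a, h⟫ = ⟪a, h⟫ := by rw [hadj, hh]
          rw [h4]; ring
        · -- m = 2 : σ a = a, contradiction
          apply hfa
          apply heq1
          push_cast at hm''
          nlinarith [hm'']
  -- assemble
  refine ⟨?_, hΔ.finite.image _, hspan, ?_, ?_, ?_⟩
  · rintro x ⟨a, ha, rfl⟩
    show σ _ = _
    exact hfix a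
  · rintro x ⟨a, ha, rfl⟩
    exact hk0 a ha
  · rintro x ⟨a, ha, rfl⟩ y ⟨b, hb, rfl⟩
    obtain ⟨n, hn, _⟩ := key a ha b hb
    exact ⟨n, hn⟩
  · rintro x ⟨a, ha, rfl⟩ y ⟨b, hb, rfl⟩
    obtain ⟨n, hn, hmem⟩ := key a ha b hb
    rw [hn]
    exact hmem
end

section
/- Let (G,K) be a symmetric pair of compact type with maximal tori T_K ⊂ T_G as above. Then no root of g with respect to t_G vanishes identically on t_k; equivalently, t_k contains g-regular elements. -/
/-! If a root `α` vanished on `t_k`, the real and imaginary parts of a root vector `X` would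
centralize `t_k`. The centralizer `z(t_k)` is abelian: its `σ`-fixed part is `t_k` by maximality,
and two `σ`-anti-fixed elements `x, y ∈ z(t_k)` have `c = [x, y] ∈ t_k`, so invariance of the
Killing form gives `B(c, c) = -B(y, [x, c]) = 0`, whence `c = 0` by definiteness. As `t_G ⊆ z(t_k)`
is maximal abelian, `z(t_k) = t_G`; so `X` commutes with `t_G`, contradicting `α ≠ 0` on `t_G`. -/

open scoped TensorProduct

/-- The complexification `g^ℂ = ℂ ⊗_ℝ g` of a real Lie algebra. -/
abbrev Complexification (g : Type*) [LieRing g] [LieAlgebra ℝ g] := ℂ ⊗[ℝ] g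

/-- `α` is a root of `g` with respect to the maximal abelian subalgebra `t_G` (here recorded
as a linear functional on all of `g`, only its values on `t_G` being relevant): `α` is nonzero
on `t_G` and the root space
`g_α = {X ∈ g^ℂ | [W, X] = i·α(W)·X for all W ∈ t_G}` is nonzero. -/
def IsRootOf {g : Type*} [LieRing g] [LieAlgebra ℝ g]
    (tG : Submodule ℝ g) (α : g →ₗ[ℝ] ℝ) : Prop :=
  (∃ W ∈ tG, α W ≠ 0) ∧
    ∃ X : Complexification g, X ≠ 0 ∧
      ∀ W ∈ tG, ⁅(1 : ℂ) ⊗ₜ[ℝ] W, X⁆ = (Complex.I * (α W : ℂ)) • X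

section Centralizer

variable (K : Type*) {L : Type*} [Field K] [LieRing L] [LieAlgebra K L]

def lieCentralizer (s : Set L) : Submodule K L where
  carrier := {y | ∀ w ∈ s, ⁅y, w⁆ = 0}
  add_mem' hx hy w hw := by rw [add_lie, hx w hw, hy w hw, add_zero]
  zero_mem' w _ := zero_lie w
  smul_mem' c y hy w hw := by rw [smul_lie, hy w hw, smul_zero]

variable {K}

lemma mem_lieCentralizer {s : Set L} {y : L} : y ∈ lieCentralizer K s ↔ ∀ w ∈ s, ⁅y, w⁆ = 0 :=
  Iff.rfl

lemma mem_lieCentralizer_iff_lie_left {s : Set L} {y : L} :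
    y ∈ lieCentralizer K s ↔ ∀ w ∈ s, ⁅w, y⁆ = 0 := by
  simp only [mem_lieCentralizer]
  exact forall₂_congr fun w _ => by rw [← lie_skew, neg_eq_zero]

lemma lieCentralizer_subset_of_isMaximalAbelian {t a : Set L}
    (hcomm : ∀ x ∈ lieCentralizer K t, ∀ y ∈ lieCentralizer K t, ⁅x, y⁆ = 0) (hta : t ⊆ a)
    (ha_abelian : ∀ x ∈ a, ∀ y ∈ a, ⁅x, y⁆ = 0) (ha_max : ∀ z : L, (∀ x ∈ a, ⁅z, x⁆ = 0) → z ∈ a) :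
    (lieCentralizer K t : Set L) ⊆ a := fun y hy =>
  ha_max y fun x hx => hcomm y hy x fun w hw => ha_abelian x hx w (hta hw)

end Centralizer

section ComplexComponents

variable {V : Type*} [AddCommGroup V] [Module ℝ V]

noncomputable def complexComponent (f : ℂ →ₗ[ℝ] ℝ) (V : Type*) [AddCommGroup V] [Module ℝ V] :
    ℂ ⊗[ℝ] V →ₗ[ℝ] V :=
  (TensorProduct.lid ℝ V).toLinearMap ∘ₗ f.rTensor V

@[simp] lemma complexComponent_tmul (f : ℂ →ₗ[ℝ] ℝ) (a : ℂ) (v : V) :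
    complexComponent f V (a ⊗ₜ v) = f a • v := by
  simp [complexComponent]

lemma one_tmul_re_add_I_tmul_im (X : ℂ ⊗[ℝ] V) :
    (1 : ℂ) ⊗ₜ complexComponent Complex.reLm V X +
      Complex.I ⊗ₜ complexComponent Complex.imLm V X = X := by
  induction X using TensorProduct.induction_on with
  | zero => simp
  | tmul a v =>
    rw [complexComponent_tmul, complexComponent_tmul, TensorProduct.tmul_smul,
      TensorProduct.tmul_smul, TensorProduct.smul_tmul', TensorProduct.smul_tmul',
      ← TensorProduct.add_tmul]
    congr 1
    simp [Complex.real_smul]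
  | add X Y hX hY =>
    rw [map_add, map_add, TensorProduct.tmul_add, TensorProduct.tmul_add]
    nth_rw 3 [← hX]; nth_rw 3 [← hY]
    abel

lemma eq_zero_iff_re_eq_zero_and_im_eq_zero (X : ℂ ⊗[ℝ] V) :
    X = 0 ↔ complexComponent Complex.reLm V X = 0 ∧ complexComponent Complex.imLm V X = 0 := by
  refine ⟨fun h => by simp [h], fun ⟨hre, him⟩ => ?_⟩
  rw [← one_tmul_re_add_I_tmul_im X, hre, him]
  simp

variable {L : Type*} [LieRing L] [LieAlgebra ℝ L]

lemma complexComponent_lie_one_tmul (f : ℂ →ₗ[ℝ] ℝ) (w : L) (X : ℂ ⊗[ℝ] L) :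
    complexComponent f L ⁅(1 : ℂ) ⊗ₜ[ℝ] w, X⁆ = ⁅w, complexComponent f L X⁆ := by
  induction X using TensorProduct.induction_on with
  | zero => exact (congrArg _ (lie_zero ((1 : ℂ) ⊗ₜ[ℝ] w))).trans (by simp)
  | tmul a v => simp [LieAlgebra.ExtendScalars.bracket_tmul, lie_smul]
  | add X Y hX hY =>
    exact (congrArg _ (lie_add ((1 : ℂ) ⊗ₜ[ℝ] w) X Y)).trans
      (by rw [map_add, hX, hY, map_add, lie_add])

lemma lie_one_tmul_eq_zero_iff (w : L) (X : ℂ ⊗[ℝ] L) :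
    ⁅(1 : ℂ) ⊗ₜ[ℝ] w, X⁆ = 0 ↔
      ⁅w, complexComponent Complex.reLm L X⁆ = 0 ∧ ⁅w, complexComponent Complex.imLm L X⁆ = 0 := by
  rw [eq_zero_iff_re_eq_zero_and_im_eq_zero, complexComponent_lie_one_tmul,
    complexComponent_lie_one_tmul]

lemma complexComponent_mem_lieCentralizer (f : ℂ →ₗ[ℝ] ℝ) {s : Set L} {X : ℂ ⊗[ℝ] L}
    (hX : ∀ w ∈ s, ⁅(1 : ℂ) ⊗ₜ[ℝ] w, X⁆ = 0) : complexComponent f L X ∈ lieCentralizer ℝ s :=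
  mem_lieCentralizer_iff_lie_left.2 fun w hw => by
    rw [← complexComponent_lie_one_tmul, hX w hw, map_zero]

end ComplexComponents

namespace LieHom

variable {K L : Type*} [Field K] [LieRing L] [LieAlgebra K L]
  (σ : L →ₗ⁅K⁆ L) {t : Submodule K L}

lemma mem_lieCentralizer_of_fixed (hfix : ∀ x ∈ t, σ x = x) {y : L}
    (hy : y ∈ lieCentralizer K t) : σ y ∈ lieCentralizer K t := fun w hw => by
  rw [← hfix w hw, ← σ.map_lie, hy w hw, map_zero]

/-- The decomposition `z(t) = t ⊕ (z(t) ∩ p)`. -/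
lemma exists_add_eq_of_mem_lieCentralizer [NeZero (2 : K)] (hσ : ∀ x, σ (σ x) = x)
    (hfix : ∀ x ∈ t, σ x = x) (hmax : ∀ z : L, σ z = z → (∀ x ∈ t, ⁅z, x⁆ = 0) → z ∈ t)
    {y : L} (hy : y ∈ lieCentralizer K t) :
    ∃ a ∈ t, ∃ b ∈ lieCentralizer K t, σ b = -b ∧ a + b = y := by
  have hσy := σ.mem_lieCentralizer_of_fixed hfix hy
  refine ⟨(2⁻¹ : K) • (y + σ y), hmax _ ?_ ?_, (2⁻¹ : K) • (y - σ y), ?_, ?_, ?_⟩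
  · rw [map_smul, map_add, hσ, add_comm]
  · exact Submodule.smul_mem _ _ (Submodule.add_mem _ hy hσy)
  · exact Submodule.smul_mem _ _ (Submodule.sub_mem _ hy hσy)
  · rw [map_smul, map_sub, hσ, ← smul_neg, neg_sub]
  · rw [← smul_add, add_add_sub_cancel, ← two_smul K y, smul_smul,
      inv_mul_cancel₀ two_ne_zero, one_smul]

lemma lie_eq_zero_of_apply_eq_neg (Φ : LinearMap.BilinForm K L) (hΦ : Φ.lieInvariant L)
    (hΦ_anis : ∀ x, Φ x x = 0 → x = 0)
    (hmax : ∀ z : L, σ z = z → (∀ x ∈ t, ⁅z, x⁆ = 0) → z ∈ t)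
    {x y : L} (hx : x ∈ lieCentralizer K t) (hy : y ∈ lieCentralizer K t)
    (hσx : σ x = -x) (hσy : σ y = -y) : ⁅x, y⁆ = 0 := by
  have hfixed : σ ⁅x, y⁆ = ⁅x, y⁆ := by rw [σ.map_lie, hσx, hσy, neg_lie, lie_neg, neg_neg]
  have hcent : ⁅x, y⁆ ∈ lieCentralizer K t := fun w hw => by
    rw [lie_lie, hx w hw, hy w hw, lie_zero, lie_zero, sub_zero]
  have hmem : ⁅x, y⁆ ∈ t := hmax _ hfixed hcent
  apply hΦ_anis
  calc Φ ⁅x, y⁆ ⁅x, y⁆ = -Φ y ⁅x, ⁅x, y⁆⁆ := hΦ x y _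
    _ = 0 := by rw [hx _ hmem, map_zero, neg_zero]

lemma lie_eq_zero_of_mem_lieCentralizer [NeZero (2 : K)] (Φ : LinearMap.BilinForm K L)
    (hΦ : Φ.lieInvariant L) (hΦ_anis : ∀ x, Φ x x = 0 → x = 0) (hσ : ∀ x, σ (σ x) = x)
    (hfix : ∀ x ∈ t, σ x = x) (hmax : ∀ z : L, σ z = z → (∀ x ∈ t, ⁅z, x⁆ = 0) → z ∈ t)
    {x y : L} (hx : x ∈ lieCentralizer K t) (hy : y ∈ lieCentralizer K t) : ⁅x, y⁆ = 0 := by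
  obtain ⟨xk, hxk, xp, hxp, hσxp, rfl⟩ := σ.exists_add_eq_of_mem_lieCentralizer hσ hfix hmax hx
  have hxk_y : ⁅xk, y⁆ = 0 := mem_lieCentralizer_iff_lie_left.1 hy xk hxk
  obtain ⟨yk, hyk, yp, hyp, hσyp, rfl⟩ := σ.exists_add_eq_of_mem_lieCentralizer hσ hfix hmax hy
  rw [add_lie, hxk_y, zero_add, lie_add, hxp yk hyk, zero_add,
    σ.lie_eq_zero_of_apply_eq_neg Φ hΦ hΦ_anis hmax hxp hyp hσxp hσyp]

end LieHom

theorem no_root_vanishes_on_tk_general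
    {g : Type*} [LieRing g] [LieAlgebra ℝ g]
    (hcompact : ∀ x : g, x ≠ 0 → killingForm ℝ g x x < 0)
    (σ : g →ₗ⁅ℝ⁆ g) (hσinv : ∀ x, σ (σ x) = x)
    (tk tG : Submodule ℝ g)
    (htk_fixed : ∀ x ∈ tk, σ x = x)
    (htk_max : ∀ z : g, σ z = z → (∀ x ∈ tk, ⁅z, x⁆ = 0) → z ∈ tk)
    (htksub : tk ≤ tG)
    (htG_abelian : ∀ x ∈ tG, ∀ y ∈ tG, ⁅x, y⁆ = 0)
    (htG_max : ∀ z : g, (∀ x ∈ tG, ⁅z, x⁆ = 0) → z ∈ tG)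
    (α : g →ₗ[ℝ] ℝ) (hα : IsRootOf tG α) :
    ∃ H ∈ tk, α H ≠ 0 := by
  obtain ⟨⟨W, hW, hαW⟩, X, hX0, hX⟩ := hα
  by_contra! hvan
  have hanis : ∀ x, killingForm ℝ g x x = 0 → x = 0 := fun x hx => by
    by_contra hx0
    exact (hcompact x hx0).ne hx
  have hcent : (lieCentralizer ℝ (tk : Set g) : Set g) ⊆ tG :=
    lieCentralizer_subset_of_isMaximalAbelian
      (fun _ hx _ hy => σ.lie_eq_zero_of_mem_lieCentralizer (killingForm ℝ g)
        (LieModule.traceForm_lieInvariant ℝ g g) hanis hσinv htk_fixed htk_max hx hy)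
      htksub htG_abelian htG_max
  have hXtk : ∀ w ∈ tk, ⁅(1 : ℂ) ⊗ₜ[ℝ] w, X⁆ = 0 := fun w hw => by
    rw [hX w (htksub hw), hvan w hw]
    simp
  have hre := hcent (complexComponent_mem_lieCentralizer Complex.reLm hXtk)
  have him := hcent (complexComponent_mem_lieCentralizer Complex.imLm hXtk)
  have hWX : ⁅(1 : ℂ) ⊗ₜ[ℝ] W, X⁆ = 0 :=
    (lie_one_tmul_eq_zero_iff W X).2 ⟨htG_abelian W hW _ hre, htG_abelian W hW _ him⟩
  rw [hX W hW, smul_eq_zero] at hWX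
  exact hWX.elim (mul_ne_zero Complex.I_ne_zero (by exact_mod_cast hαW)) hX0

/-- Let `g` be the Lie algebra of a symmetric pair of compact type: `g` is a finite-dimensional
real Lie algebra with negative definite Killing form, `σ` an involutive automorphism of `g`
with eigenspace decomposition `g = k ⊕ p`, `t_k` a maximal abelian subalgebra of the fixed
algebra `k`, and `t_G` a maximal abelian subalgebra of `g` containing `t_k` (the Lie algebra of
the unique maximal torus `T_G ⊇ T_K`).  Then no root of `g` with respect to `t_G` vanishes
identically on `t_k`; equivalently, `t_k` contains `g`-regular elements. -/
theorem no_root_vanishes_on_tk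
    {g : Type*} [LieRing g] [LieAlgebra ℝ g] [Module.Finite ℝ g]
    (hcompact : ∀ x : g, x ≠ 0 → killingForm ℝ g x x < 0)
    (σ : g →ₗ⁅ℝ⁆ g) (hσinv : ∀ x, σ (σ x) = x)
    (tk tG : Submodule ℝ g)
    (htk_fixed : ∀ x ∈ tk, σ x = x)
    (htk_abelian : ∀ x ∈ tk, ∀ y ∈ tk, ⁅x, y⁆ = 0)
    (htk_max : ∀ z : g, σ z = z → (∀ x ∈ tk, ⁅z, x⁆ = 0) → z ∈ tk)
    (htksub : tk ≤ tG)
    (htG_abelian : ∀ x ∈ tG, ∀ y ∈ tG, ⁅x, y⁆ = 0)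
    (htG_max : ∀ z : g, (∀ x ∈ tG, ⁅z, x⁆ = 0) → z ∈ tG)
    (α : g →ₗ[ℝ] ℝ) (hα : IsRootOf tG α) :
    ∃ H ∈ tk, α H ≠ 0 :=
  no_root_vanishes_on_tk_general hcompact σ hσinv tk tG htk_fixed htk_max htksub htG_abelian htG_max
    α hα
end
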